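/- The centralizer of R[x] in the quantum Weyl algebra D_q (q a primitive p-th root of unity, p prime) is the subalgebra R[x, δ^p]: an element P ∈ D_q commutes with x if and only if P is a polynomial in x and δ^p. -/

import Mathlib

/-!
The monomials `x^i δ^j` form an `R`-basis of `D_q`: they span because
`δ^j x = q^j x δ^j + [j] δ^(j-1)` moves `x` to the left, and they are independent because `D_q`
acts on the free module on symbols `e (i, j)` with `x^i δ^j` sending `e (0, 0)` to `e (i, j)`.

Since `x^i δ^j x - x^(i+1) δ^j = [j] ((q - 1) x^(i+1) δ^j + x^i δ^(j-1))`, if `P` has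
coordinates `a(k,l)` then the coefficient of `x^(k+1) δ^l` in `P x - x P` is
`(q - 1) [l] a(k,l) + [l+1] a(k+1,l+1)` and that of `δ^l` is `[l+1] a(0,l+1)`. Induction on `k`
shows that `P` commutes with `x` iff `[l] a(k,l) = 0` for all `k, l`, and when `q` is a primitive
`p`-th root of unity in a domain, `[l] = 0` iff `p ∣ l`.
-/

noncomputable section

/-- The quantum integer `[n] = 1 + q + ⋯ + q^(n-1)`. -/
def qint {R : Type} [CommRing R] (q : R) (n : ℕ) : R := ∑ k ∈ Finset.range n, q ^ k

/-- The defining relation `δx = q·xδ + 1` of the quantum Weyl algebra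
(generator `0` is `x`, generator `1` is `δ`). -/
inductive WeylRel (R : Type) [CommRing R] (q : R) :
    FreeAlgebra R (Fin 2) → FreeAlgebra R (Fin 2) → Prop
  | rel : WeylRel R q (FreeAlgebra.ι R 1 * FreeAlgebra.ι R 0)
      (q • (FreeAlgebra.ι R 0 * FreeAlgebra.ι R 1) + 1)

/-- The quantum Weyl algebra `D_q = R⟨x,δ⟩/(δx - qxδ - 1)`. -/
def Weyl (R : Type) [CommRing R] (q : R) := RingQuot (WeylRel R q)

instance (R : Type) [CommRing R] (q : R) : Ring (Weyl R q) :=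
  inferInstanceAs (Ring (RingQuot _))

instance (R : Type) [CommRing R] (q : R) : Algebra R (Weyl R q) :=
  inferInstanceAs (Algebra R (RingQuot _))

/-- The generator `x` of the quantum Weyl algebra. -/
def Wx (R : Type) [CommRing R] (q : R) : Weyl R q :=
  RingQuot.mkAlgHom R (WeylRel R q) (FreeAlgebra.ι R 0)

/-- The generator `δ` of the quantum Weyl algebra. -/
def Wd (R : Type) [CommRing R] (q : R) : Weyl R q :=
  RingQuot.mkAlgHom R (WeylRel R q) (FreeAlgebra.ι R 1)

section qint

variable {R : Type} [CommRing R] (q : R)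

theorem qint_zero : qint q 0 = 0 := by simp [qint]

theorem qint_succ (n : ℕ) : qint q (n + 1) = q * qint q n + 1 := by
  simp [qint, geom_sum_succ]

theorem qint_succ' (n : ℕ) : qint q (n + 1) = qint q n + q ^ n := Finset.sum_range_succ _ n

theorem qint_mul_sub_one (n : ℕ) : qint q n * (q - 1) = q ^ n - 1 := geom_sum_mul q n

theorem qint_eq_zero_iff_dvd [IsDomain R] {p : ℕ} (hq : IsPrimitiveRoot q p) (hp : 1 < p)
    (n : ℕ) : qint q n = 0 ↔ p ∣ n := by
  rw [← hq.pow_eq_one_iff_dvd, ← sub_eq_zero (a := q ^ n), ← qint_mul_sub_one, mul_eq_zero,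
    sub_eq_zero, or_iff_left (hq.ne_one hp)]

end qint

theorem Module.Basis.existsUnique_eq_sum_embDomain_iff {ι κ R M : Type*} [Semiring R]
    [AddCommMonoid M] [Module R M] (b : Module.Basis κ R M) (f : ι ↪ κ) (x : M) :
    (∃! a : ι →₀ R, x = a.sum fun i c => c • b (f i)) ↔
      ↑(b.repr x).support ⊆ Set.range f := by
  have key (a : ι →₀ R) :
      (x = a.sum fun i c => c • b (f i)) ↔ b.repr x = a.embDomain f := by
    rw [← Finsupp.sum_embDomain (g := fun k c => c • b k), ← Finsupp.linearCombination_apply,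
      ← b.repr_symm_apply, LinearEquiv.eq_symm_apply]
  simp only [key, ← Finsupp.mem_range_embDomain_iff]
  exact ⟨fun ⟨a, ha, _⟩ => ⟨a, ha.symm⟩,
    fun ⟨a, ha⟩ =>
      ⟨a, ha.symm, fun _ h => Finsupp.embDomain_injective f (h.symm.trans ha.symm)⟩⟩

namespace Weyl

variable {R : Type} [CommRing R] (q : R)

theorem d_mul_x : Wd R q * Wx R q = q • (Wx R q * Wd R q) + 1 := by
  have h := RingQuot.mkAlgHom_rel R (WeylRel.rel (R := R) (q := q))
  simp only [map_mul, map_add, map_smul, map_one] at h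
  exact h

theorem d_pow_succ_mul_x (j : ℕ) :
    Wd R q ^ (j + 1) * Wx R q =
      q ^ (j + 1) • (Wx R q * Wd R q ^ (j + 1)) + qint q (j + 1) • Wd R q ^ j := by
  induction j with
  | zero => simp [d_mul_x, qint]
  | succ j ih =>
    rw [pow_succ', mul_assoc, ih, mul_add, mul_smul_comm, mul_smul_comm, ← mul_assoc, d_mul_x,
      qint_succ' q (j + 1)]
    simp only [add_mul, smul_mul_assoc, one_mul, mul_assoc, ← pow_succ', smul_add, smul_smul]
    rw [pow_succ q (j + 1)]
    module

/- At `j = 0` the truncated `j - 1` is harmless: its coefficient is `[0] = 0`. -/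
theorem x_pow_mul_d_pow_mul_x (i j : ℕ) :
    Wx R q ^ i * Wd R q ^ j * Wx R q =
      q ^ j • (Wx R q ^ (i + 1) * Wd R q ^ j) + qint q j • (Wx R q ^ i * Wd R q ^ (j - 1)) := by
  cases j with
  | zero => simp [qint_zero, pow_succ]
  | succ j =>
    rw [mul_assoc, d_pow_succ_mul_x, mul_add, mul_smul_comm, mul_smul_comm, ← mul_assoc,
      ← pow_succ, Nat.add_sub_cancel]

open Finsupp

/- Left multiplication by `x` and `δ` on normal-form monomials `e (i, j) = x^i δ^j`; the formula
for `δ` is `δ x^i = q^i x^i δ + [i] x^(i-1)`. -/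
def xOp : Module.End R (ℕ × ℕ →₀ R) := lmapDomain R R fun ij => (ij.1 + 1, ij.2)

def dOp : Module.End R (ℕ × ℕ →₀ R) :=
  lsum ℕ fun ij => LinearMap.id.smulRight
    (single (ij.1, ij.2 + 1) (q ^ ij.1) + single (ij.1 - 1, ij.2) (qint q ij.1))

variable {q}

theorem xOp_single (ij : ℕ × ℕ) (c : R) :
    xOp (single ij c) = single (ij.1 + 1, ij.2) c := by
  simp [xOp, mapDomain_single]

theorem dOp_single (ij : ℕ × ℕ) (c : R) :
    dOp q (single ij c) =
      single (ij.1, ij.2 + 1) (c * q ^ ij.1) + single (ij.1 - 1, ij.2) (c * qint q ij.1) := by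
  simp [dOp, smul_add, smul_single, smul_eq_mul]

variable (q)

theorem dOp_mul_xOp : dOp q * xOp = q • (xOp * dOp q) + 1 := by
  refine lhom_ext fun ⟨i, j⟩ c => ?_
  simp only [Module.End.mul_apply, LinearMap.add_apply, LinearMap.smul_apply, Module.End.one_apply,
    xOp_single, dOp_single, map_add, smul_add, smul_single']
  cases i with
  | zero =>
    simp only [zero_add, pow_one, pow_zero, qint_succ, qint_zero, mul_zero, single_zero, add_zero,
      mul_one]
    rw [mul_comm]
  | succ i =>
    simp only [Nat.add_sub_cancel]
    rw [add_assoc (single _ _), ← single_add, qint_succ q (i + 1)]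
    congr 2 <;> ring

def rep : Weyl R q →ₐ[R] Module.End R (ℕ × ℕ →₀ R) :=
  RingQuot.liftAlgHom R ⟨FreeAlgebra.lift R ![xOp, dOp q], by
    rintro _ _ ⟨⟩
    simpa using dOp_mul_xOp q⟩

theorem rep_x : rep q (Wx R q) = xOp :=
  (RingQuot.liftAlgHom_mkAlgHom_apply _ _ _ _).trans (by simp)

theorem rep_d : rep q (Wd R q) = dOp q :=
  (RingQuot.liftAlgHom_mkAlgHom_apply _ _ _ _).trans (by simp)

theorem dOp_pow_single_zero (j : ℕ) : (dOp q ^ j) (single (0, 0) (1 : R)) = single (0, j) 1 := by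
  induction j with
  | zero => rfl
  | succ j ih => simp [pow_succ', ih, dOp_single, qint_zero]

theorem xOp_pow_single (i : ℕ) (ij : ℕ × ℕ) (c : R) :
    (xOp ^ i) (single ij c) = single (ij.1 + i, ij.2) c := by
  induction i with
  | zero => rfl
  | succ i ih => simp [pow_succ', ih, xOp_single, add_assoc]

theorem linearIndependent_monomial :
    LinearIndependent R fun ij : ℕ × ℕ => Wx R q ^ ij.1 * Wd R q ^ ij.2 := by
  let coeff : Weyl R q →ₗ[R] ℕ × ℕ →₀ R :=
    LinearMap.applyₗ (single (0, 0) 1) ∘ₗ (rep q).toLinearMap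
  refine LinearIndependent.of_comp coeff ?_
  convert (Finsupp.basisSingleOne : Module.Basis (ℕ × ℕ) R _).linearIndependent
  ext1 ⟨i, j⟩
  simp [coeff, rep_x, rep_d, dOp_pow_single_zero, xOp_pow_single]

theorem mul_mem_span_monomial (P : Weyl R q) {s : Weyl R q}
    (hs : s ∈ Submodule.span R (Set.range fun ij : ℕ × ℕ => Wx R q ^ ij.1 * Wd R q ^ ij.2)) :
    s * P ∈
      Submodule.span R (Set.range fun ij : ℕ × ℕ => Wx R q ^ ij.1 * Wd R q ^ ij.2) := by
  set S := Submodule.span R (Set.range fun ij : ℕ × ℕ => Wx R q ^ ij.1 * Wd R q ^ ij.2)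
  have mem (i j : ℕ) : Wx R q ^ i * Wd R q ^ j ∈ S := Submodule.subset_span ⟨(i, j), rfl⟩
  have mul_mem (g : Weyl R q) (hg : ∀ i j, Wx R q ^ i * Wd R q ^ j * g ∈ S) {s}
      (hs : s ∈ S) : s * g ∈ S :=
    (Submodule.span_le (p := S.comap (LinearMap.mulRight R g))).mpr
      (by rintro _ ⟨⟨i, j⟩, rfl⟩; exact hg i j) hs
  let π : FreeAlgebra R (Fin 2) →ₐ[R] Weyl R q := RingQuot.mkAlgHom R (WeylRel R q)
  obtain ⟨y, rfl⟩ : ∃ y, π y = P := RingQuot.mkAlgHom_surjective R (WeylRel R q) P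
  induction y using FreeAlgebra.induction generalizing s with
  | grade0 r =>
    rw [AlgHom.commutes, ← Algebra.commutes, ← Algebra.smul_def]
    exact S.smul_mem r hs
  | grade1 i =>
    fin_cases i
    · refine mul_mem (Wx R q) (fun i j => ?_) hs
      rw [x_pow_mul_d_pow_mul_x]
      exact add_mem (S.smul_mem _ (mem _ _)) (S.smul_mem _ (mem _ _))
    · exact mul_mem (Wd R q) (fun i j => by rw [mul_assoc, ← pow_succ]; exact mem _ _) hs
  | mul a b ha hb =>
    rw [map_mul, ← mul_assoc]
    exact hb (ha hs)
  | add a b ha hb =>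
    rw [map_add, mul_add]
    exact add_mem (ha hs) (hb hs)

theorem span_monomial_eq_top :
    Submodule.span R (Set.range fun ij : ℕ × ℕ => Wx R q ^ ij.1 * Wd R q ^ ij.2) = ⊤ :=
  Submodule.eq_top_iff'.mpr fun P => by
    simpa using mul_mem_span_monomial q P (s := 1) (Submodule.subset_span ⟨(0, 0), by simp⟩)

def monomialBasis : Module.Basis (ℕ × ℕ) R (Weyl R q) :=
  .mk (linearIndependent_monomial q) (span_monomial_eq_top q).ge

theorem monomialBasis_apply (i j : ℕ) : monomialBasis q (i, j) = Wx R q ^ i * Wd R q ^ j :=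
  Module.Basis.mk_apply _ _ _

theorem monomialBasis_mul_x_sub_x_mul (i j : ℕ) :
    monomialBasis q (i, j) * Wx R q - Wx R q * monomialBasis q (i, j) =
      qint q j • ((q - 1) • monomialBasis q (i + 1, j) + monomialBasis q (i, j - 1)) := by
  rw [smul_add, smul_smul, qint_mul_sub_one]
  simp only [monomialBasis_apply, x_pow_mul_d_pow_mul_x, sub_smul, one_smul, ← mul_assoc,
    ← pow_succ']
  abel

theorem repr_mul_x_sub_x_mul_zero (P : Weyl R q) (l : ℕ) :
    (monomialBasis q).repr (P * Wx R q - Wx R q * P) (0, l) =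
      qint q (l + 1) * (monomialBasis q).repr P (0, l + 1) := by
  set b := monomialBasis q
  have : b.coord (0, l) ∘ₗ (LinearMap.mulRight R (Wx R q) - LinearMap.mulLeft R (Wx R q)) =
      qint q (l + 1) • b.coord (0, l + 1) := by
    refine b.ext fun ⟨i, j⟩ => ?_
    rcases j with _ | j <;>
      simp only [b, LinearMap.comp_apply, LinearMap.sub_apply, LinearMap.mulRight_apply,
        LinearMap.mulLeft_apply, monomialBasis_mul_x_sub_x_mul, Module.Basis.coord_apply, map_add,
        map_smul, Module.Basis.repr_self, LinearMap.smul_apply, single_apply, smul_eq_mul] <;>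
      grind [qint_zero]
  exact LinearMap.congr_fun this P

theorem repr_mul_x_sub_x_mul_succ (P : Weyl R q) (k l : ℕ) :
    (monomialBasis q).repr (P * Wx R q - Wx R q * P) (k + 1, l) =
      qint q l * (q - 1) * (monomialBasis q).repr P (k, l) +
        qint q (l + 1) * (monomialBasis q).repr P (k + 1, l + 1) := by
  set b := monomialBasis q
  have : b.coord (k + 1, l) ∘ₗ (LinearMap.mulRight R (Wx R q) - LinearMap.mulLeft R (Wx R q)) =
      (qint q l * (q - 1)) • b.coord (k, l) + qint q (l + 1) • b.coord (k + 1, l + 1) := by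
    refine b.ext fun ⟨i, j⟩ => ?_
    rcases j with _ | j <;>
      simp only [b, LinearMap.comp_apply, LinearMap.sub_apply, LinearMap.mulRight_apply,
        LinearMap.mulLeft_apply, monomialBasis_mul_x_sub_x_mul, Module.Basis.coord_apply, map_add,
        map_smul, Module.Basis.repr_self, LinearMap.add_apply, LinearMap.smul_apply, single_apply,
        smul_eq_mul] <;>
      grind [qint_zero]
  exact LinearMap.congr_fun this P

theorem mul_x_eq_x_mul_iff (P : Weyl R q) :
    P * Wx R q = Wx R q * P ↔ ∀ t, qint q t.2 * (monomialBasis q).repr P t = 0 := by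
  rw [← sub_eq_zero, (monomialBasis q).ext_elem_iff]
  simp only [map_zero, coe_zero, Pi.zero_apply]
  constructor
  · intro h ⟨k, l⟩
    induction k generalizing l with
    | zero =>
      cases l with
      | zero => simp [qint_zero]
      | succ l =>
        have h0l := h (0, l)
        rwa [repr_mul_x_sub_x_mul_zero] at h0l
    | succ k ih =>
      cases l with
      | zero => simp [qint_zero]
      | succ l =>
        have hkl := h (k + 1, l)
        rw [repr_mul_x_sub_x_mul_succ] at hkl
        linear_combination hkl - (q - 1) * ih l
  · rintro h ⟨_ | k, l⟩
    · rw [repr_mul_x_sub_x_mul_zero]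
      exact h (0, l + 1)
    · rw [repr_mul_x_sub_x_mul_succ]
      linear_combination (q - 1) * h (k, l) + h (k + 1, l + 1)

theorem algebraMap_mul_x_pow_mul_d_pow (c : R) (i j : ℕ) :
    algebraMap R (Weyl R q) c * Wx R q ^ i * Wd R q ^ j = c • monomialBasis q (i, j) := by
  rw [monomialBasis_apply, Algebra.smul_def, mul_assoc]

end Weyl

theorem stmt16_general (p : ℕ) (hp : p.Prime) (R : Type) [CommRing R] [IsDomain R]
    (q : R) (hq : IsPrimitiveRoot q p)
    (P : Weyl R q) :
    P * Wx R q = Wx R q * P ↔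
      ∃! a : ℕ × ℕ →₀ R,
        P = a.sum fun ij c =>
          algebraMap R (Weyl R q) c * Wx R q ^ ij.1 * Wd R q ^ (p * ij.2) := by
  let e : ℕ × ℕ ↪ ℕ × ℕ := ⟨fun ij => (ij.1, p * ij.2), fun _ _ h => by
    simp only [Prod.mk.injEq] at h
    exact Prod.ext h.1 (Nat.eq_of_mul_eq_mul_left hp.pos h.2)⟩
  have range_e : Set.range e = {t | p ∣ t.2} := by
    ext ⟨i, j⟩
    constructor
    · rintro ⟨⟨a, b⟩, h⟩
      exact ⟨b, (congrArg Prod.snd h).symm⟩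
    · rintro ⟨b, rfl : j = p * b⟩
      exact ⟨(i, b), rfl⟩
  simp_rw [Weyl.algebraMap_mul_x_pow_mul_d_pow]
  refine (Weyl.mul_x_eq_x_mul_iff q P).trans (Iff.symm ?_)
  refine ((Weyl.monomialBasis q).existsUnique_eq_sum_embDomain_iff e P).trans ?_
  simp only [range_e, Set.subset_def, Finset.mem_coe, Finsupp.mem_support_iff, Set.mem_ofPred_eq,
    ← qint_eq_zero_iff_dvd q hq hp.one_lt, mul_eq_zero]
  exact forall_congr' fun t => or_iff_not_imp_right.symm

/-- The centralizer of `R[x]` in `D_q` is `R[x, δ^p]`: an element commutes with `x`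
iff it has a (necessarily unique) representation as a polynomial in `x` and `δ^p`. -/
theorem stmt16 (p : ℕ) (hp : p.Prime) (R : Type) [CommRing R] [IsDomain R] [CharZero R]
    (q : R) (hq : IsPrimitiveRoot q p) (hgen : Algebra.adjoin ℤ ({q} : Set R) = ⊤)
    (P : Weyl R q) :
    P * Wx R q = Wx R q * P ↔
      ∃! a : ℕ × ℕ →₀ R,
        P = a.sum fun ij c =>
          algebraMap R (Weyl R q) c * Wx R q ^ ij.1 * Wd R q ^ (p * ij.2) :=
  stmt16_general p hp R q hq P
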